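/- arXiv:1204.1751 — 2 statements merged into one kernel-verified Lean document; each statement's English description precedes it below -/
import Mathlib

section
/- If every rewrite rule in an error model is well-formed (i.e., every tagged subterm on the right-hand side has a strictly smaller syntax tree than the left-hand side), then the recursive rewriting function RewriteF, which applies all matching rules to a term and recurses only on tagged subterms and on proper subterms, terminates on every input term. -/
/-- Terms are finitely-branching rooted trees. -/
inductive Term where
  | node : List Term → Term

/-- Size of a term: number of nodes in its syntax tree. -/
def Term.size : Term → ℕ
  | .node ts => 1 + (ts.attach.map (fun ⟨t, _⟩ => t.size)).sum
decreasing_by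
  have := List.sizeOf_lt_of_mem ‹_›
  simp only [Term.node.sizeOf_spec] at *
  omega

/-- The immediate subterms of a term. -/
def Term.children : Term → List Term
  | .node ts => ts

/-- A rewrite rule: it matched certain terms, and on a matched term `w` it
produces an instantiated right-hand side whose tagged positions hold the
terms `tagged w`. -/
structure Rule where
  matched : Term → Prop
  tagged : Term → List Term

/-- A rule is well-formed if, whenever it matched a term (the instantiation of
its left-hand side `L`), every term at a tagged position of the instantiated
right-hand side has strictly smaller syntax tree than `L`. -/
def WellFormedRule (r : Rule) : Prop :=
  ∀ w : Term, r.matched w → ∀ t ∈ r.tagged w, t.size < w.size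

/-- One recursive-call step of `RewriteF` for an error model: from `w`,
`RewriteF` recurses on every immediate subterm of `w` and, for each matching
rule, on every term at a tagged position of the instantiated right-hand
side. -/
def RecStep (model : List Rule) (u w : Term) : Prop :=
  u ∈ w.children ∨ ∃ r ∈ model, r.matched w ∧ u ∈ r.tagged w

lemma size_lt_of_mem_children {u w : Term} (h : u ∈ w.children) :
    u.size < w.size := by
  obtain ⟨ts⟩ := w
  simp [Term.children] at h
  rw [Term.size]
  have : u.size ∈ (ts.attach.map (fun ⟨t, _⟩ => t.size)) :=
    List.mem_map.mpr ⟨⟨u, h⟩, List.mem_attach _ _, rfl⟩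
  have := List.le_sum_of_mem this
  omega

/-- If every rewrite rule in the error model is well-formed, then the
recursion of `RewriteF` is well-founded (with respect to term size), i.e.
`RewriteF` terminates on every input term. -/
theorem rewriteF_terminates (model : List Rule)
    (hwf : ∀ r ∈ model, WellFormedRule r) :
    WellFounded (RecStep model) := by
  apply Subrelation.wf (r := InvImage (· < ·) Term.size)
  · rintro u w (h | ⟨r, hr, hm, ht⟩)
    · exact size_lt_of_mem_children h
    · exact hwf r hr w hm u ht
  · exact InvImage.wf _ Nat.lt_wfRel.wf
end

section
/- Applying the three-rule error model (return e → return [0]; range(a,b) → range(a+1,b); e₀ == e₁ → False) to the student's computeDeriv yields a candidate space containing a program extensionally equal to the reference on all lists of length ≤ 4 with 4-bit entries, and the minimum number of corrections over all such equivalent candidates is 3. -/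
def computeDeriv (poly : List ℤ) : List ℤ :=
  let result := (List.range poly.length).map (fun i : ℕ => (i : ℤ) * poly[i]!)
  if poly.length = 1 then result else result.tail

/-- The candidate space induced by the three-rule error model on the student's
program: 5 binary correction sites.
Site 1 toggles `len(poly)==1` to `False`; site 2 toggles the length-1 branch
`return deriv` to `return [0]`; site 3 toggles the `range` start from `0` to
`1`; site 4 toggles the inner condition `poly[expo]==0` to `False`; site 5
toggles the final `return deriv` to `return [0]`. -/
def candidate (s : Bool × Bool × Bool × Bool × Bool) (poly : List ℤ) : List ℤ :=
  let s1 := s.1; let s2 := s.2.1; let s3 := s.2.2.1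
  let s4 := s.2.2.2.1; let s5 := s.2.2.2.2
  if (if s1 then False else poly.length = 1) then
    (if s2 then [0] else [])
  else
    let start : ℕ := if s3 then 1 else 0
    let deriv :=
      ((List.range' start (poly.length - start)).filter
          (fun i => if s4 then true else !(poly[i]! == 0))).map
        (fun i => poly[(i : ℕ)]! * (i : ℤ))
    if s5 then [0] else deriv

/-- Number of corrections used by a candidate. -/
def cost (s : Bool × Bool × Bool × Bool × Bool) : ℕ :=
  (if s.1 then 1 else 0) + (if s.2.1 then 1 else 0) + (if s.2.2.1 then 1 else 0) +
    (if s.2.2.2.1 then 1 else 0) + (if s.2.2.2.2 then 1 else 0)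

/-- Membership in the bounded verification domain: lists of length 1–4 with
4-bit entries. -/
def InDomain (poly : List ℤ) : Prop :=
  1 ≤ poly.length ∧ poly.length ≤ 4 ∧ ∀ x ∈ poly, -8 ≤ x ∧ x < 8


/-!
The corrected candidate agrees with `computeDeriv` on every list, not only on the bounded domain.
Three probes refute every candidate of cost at most two: on `[1, 2]` the candidate must start the
range at `1` and must not return `[0]` at the end (sites 3 and 5); on `[1, 0, 1]` it must keep the
zero coefficient (site 4); having spent two corrections on sites 3 and 4, it leaves sites 1 and 2
alone and returns `[]` on `[1]`.
-/

theorem candidate_corrected_eq_computeDeriv (poly : List ℤ) :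
    candidate (false, true, true, true, false) poly = computeDeriv poly := by
  by_cases h : poly.length = 1
  · obtain ⟨a, rfl⟩ := List.length_eq_one_iff.mp h
    simp [candidate, computeDeriv]
  · simp only [candidate, computeDeriv, h, ← List.map_tail, List.tail_range]
    simp [mul_comm]

section Probes

variable (s1 s2 s3 s4 s5 : Bool)

theorem candidate_one_two :
    candidate (s1, s2, s3, s4, s5) [1, 2] = if s5 then [0] else if s3 then [2] else [0, 2] := by
  cases s3 <;> cases s4 <;> simp [candidate, List.range'_succ]

theorem candidate_one_zero_one :
    candidate (s1, s2, true, false, s5) [1, 0, 1] = if s5 then [0] else [2] := by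
  simp [candidate, List.range'_succ]

theorem candidate_one :
    candidate (false, s2, s3, s4, s5) [1] = if s2 then [0] else [] := by
  simp [candidate]

end Probes

/-- The candidate correcting sites {2,3,4} (cost 3) agrees with the reference
on all inputs in the bounded domain, and no candidate of cost ≤ 2 does; hence
the minimum number of corrections over all equivalent candidates is 3. -/
theorem min_corrections_is_three :
    cost (false, true, true, true, false) = 3 ∧
    (∀ poly : List ℤ, InDomain poly →
      candidate (false, true, true, true, false) poly = computeDeriv poly) ∧
    (∀ s : Bool × Bool × Bool × Bool × Bool, cost s ≤ 2 →
      ∃ poly : List ℤ, InDomain poly ∧ candidate s poly ≠ computeDeriv poly) := by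
  refine ⟨rfl, fun poly _ => candidate_corrected_eq_computeDeriv poly, ?_⟩
  rintro ⟨s1, s2, s3, s4, s5⟩ hcost
  cases s5
  case true =>
    refine ⟨[1, 2], by simp [InDomain], ?_⟩
    simp only [candidate_one_two, ↓reduceIte]; decide
  cases s3
  case false =>
    refine ⟨[1, 2], by simp [InDomain], ?_⟩
    simp only [candidate_one_two, Bool.false_eq_true, ↓reduceIte]; decide
  cases s4
  case false =>
    refine ⟨[1, 0, 1], by simp [InDomain], ?_⟩
    simp only [candidate_one_zero_one, Bool.false_eq_true, ↓reduceIte]; decide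
  obtain ⟨rfl, rfl⟩ : s1 = false ∧ s2 = false := by
    cases s1 <;> cases s2 <;> simp_all [cost]
  refine ⟨[1], by simp [InDomain], ?_⟩
  simp only [candidate_one, Bool.false_eq_true, ↓reduceIte]; decide
end
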